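/- For all s, t ≥ 0, the operator norm of H_{s,t} = s·S_x⊗S_x + t·S_z⊗S_z on ℂ³ ⊗ ℂ³ equals √(s² + t²). -/

import Mathlib

/-!
`Hst s t` is a real symmetric matrix that splits along the span of `|00⟩, |02⟩, |20⟩, |22⟩, |11⟩`
and the span of the remaining four basis vectors. On the second block it acts with norm `|s|`; on
the first, `(s² + t²)‖y‖² - ‖H y‖²` is an explicit sum of three squares. Hence
`‖H‖ ≤ √(s² + t²)`, and the bound is attained: with `r = √(s² + t²)`, the vector with entries
`(r + t)/2` at `00, 22`, `(r - t)/2` at `02, 20` and `s` at `11` is an eigenvector for `r`.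
-/

open Matrix Polynomial
open scoped Kronecker Matrix.Norms.L2Operator

noncomputable def Sx : Matrix (Fin 3) (Fin 3) ℂ :=
  ((Real.sqrt 2 : ℝ) : ℂ)⁻¹ • !![0, 1, 0; 1, 0, 1; 0, 1, 0]

noncomputable def Sy : Matrix (Fin 3) (Fin 3) ℂ :=
  ((Real.sqrt 2 : ℝ) : ℂ)⁻¹ •
    !![0, -Complex.I, 0; Complex.I, 0, -Complex.I; 0, Complex.I, 0]

def Sz : Matrix (Fin 3) (Fin 3) ℂ := !![1, 0, 0; 0, 0, 0; 0, 0, -1]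

noncomputable def Svec : Fin 3 → Matrix (Fin 3) (Fin 3) ℂ := ![Sx, Sy, Sz]

noncomputable def Sdir (u : Fin 3 → ℝ) : Matrix (Fin 3) (Fin 3) ℂ :=
  (u 0 : ℂ) • Sx + (u 1 : ℂ) • Sy + (u 2 : ℂ) • Sz

noncomputable def Bell (a a' b b' : Fin 3 → ℝ) :
    Matrix (Fin 3 × Fin 3) (Fin 3 × Fin 3) ℂ :=
  Sdir a ⊗ₖ Sdir b + Sdir a ⊗ₖ Sdir b' + Sdir a' ⊗ₖ Sdir b - Sdir a' ⊗ₖ Sdir b'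

noncomputable def K (M : Matrix (Fin 3) (Fin 3) ℝ) :
    Matrix (Fin 3 × Fin 3) (Fin 3 × Fin 3) ℂ :=
  ∑ i : Fin 3, ∑ j : Fin 3, (M i j : ℂ) • (Svec i ⊗ₖ Svec j)

noncomputable def Hst (s t : ℝ) : Matrix (Fin 3 × Fin 3) (Fin 3 × Fin 3) ℂ :=
  (s : ℂ) • (Sx ⊗ₖ Sx) + (t : ℂ) • (Sz ⊗ₖ Sz)


noncomputable def ket (i j : Fin 3) : (Fin 3 × Fin 3) → ℂ := Pi.single (i, j) 1

/-- `u` is a unit vector of `ℝ³`. -/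
def IsUnitVec (u : Fin 3 → ℝ) : Prop := u 0 ^ 2 + u 1 ^ 2 + u 2 ^ 2 = 1

namespace Matrix

variable {𝕜 m n : Type*} [RCLike 𝕜] [Fintype m] [Fintype n] [DecidableEq n]

lemma l2_opNorm_le_of_sum_norm_sq_le {A : Matrix m n 𝕜} {C : ℝ} (hC : 0 ≤ C)
    (h : ∀ x : n → 𝕜, ∑ i, ‖(A *ᵥ x) i‖ ^ 2 ≤ C ^ 2 * ∑ j, ‖x j‖ ^ 2) : ‖A‖ ≤ C := by
  rw [l2_opNorm_def]
  refine ContinuousLinearMap.opNorm_le_bound _ hC fun x => ?_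
  rw [← sq_le_sq₀ (norm_nonneg _) (by positivity), mul_pow, EuclideanSpace.norm_sq_eq,
    EuclideanSpace.norm_sq_eq]
  exact h x

lemma norm_le_l2_opNorm_of_mulVec_eq_smul {A : Matrix n n 𝕜} {v : n → 𝕜} {μ : 𝕜}
    (hv : v ≠ 0) (h : A *ᵥ v = μ • v) : ‖μ‖ ≤ ‖A‖ := by
  have hle := A.l2_opNorm_mulVec (WithLp.toLp 2 v)
  rw [WithLp.ofLp_toLp, h, show (EuclideanSpace.equiv n 𝕜).symm (μ • v) = μ • WithLp.toLp 2 v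
    from rfl, norm_smul] at hle
  exact le_of_mul_le_mul_right hle (norm_pos_iff.mpr (by simpa using hv))

end Matrix

lemma Sx_kronecker_Sx :
    Sx ⊗ₖ Sx = (2⁻¹ : ℂ) • (!![0, 1, 0; 1, 0, 1; 0, 1, 0] ⊗ₖ !![0, 1, 0; 1, 0, 1; 0, 1, 0]) := by
  rw [Sx, smul_kronecker, kronecker_smul, smul_smul, ← mul_inv, ← Complex.ofReal_mul,
    Real.mul_self_sqrt zero_le_two, Complex.ofReal_ofNat]

lemma Hst_mulVec (s t : ℝ) (y : Fin 3 × Fin 3 → ℂ) :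
    Hst s t *ᵥ y = fun p =>
      ![![t * y (0,0) + s / 2 * y (1,1), s / 2 * (y (1,0) + y (1,2)),
          -(t * y (0,2)) + s / 2 * y (1,1)],
        ![s / 2 * (y (0,1) + y (2,1)), s / 2 * (y (0,0) + y (0,2) + y (2,0) + y (2,2)),
          s / 2 * (y (0,1) + y (2,1))],
        ![-(t * y (2,0)) + s / 2 * y (1,1), s / 2 * (y (1,0) + y (1,2)),
          t * y (2,2) + s / 2 * y (1,1)]] p.1 p.2 := by
  rw [Hst, Sx_kronecker_Sx, smul_smul, ← div_eq_mul_inv]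
  funext ⟨i, j⟩
  fin_cases i <;> fin_cases j <;>
    simp [Sz, mulVec, dotProduct, Fintype.sum_prod_type, Fin.sum_univ_three] <;> ring

lemma two_mul_norm_sq_half_mul_add_le (s : ℝ) (f g : ℂ) :
    2 * ‖(s : ℂ) / 2 * (f + g)‖ ^ 2 ≤ s ^ 2 * (‖f‖ ^ 2 + ‖g‖ ^ 2) := by
  have hfg : ‖f + g‖ ^ 2 ≤ 2 * (‖f‖ ^ 2 + ‖g‖ ^ 2) :=
    (pow_le_pow_left₀ (norm_nonneg _) (norm_add_le f g) 2).trans add_sq_le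
  have hs : ‖(s : ℂ) / 2‖ ^ 2 = s ^ 2 / 4 := by
    rw [norm_div, Complex.norm_real, Real.norm_eq_abs, div_pow, sq_abs]
    norm_num
  rw [norm_mul, mul_pow, hs]
  nlinarith [mul_le_mul_of_nonneg_left hfg (sq_nonneg s)]

lemma norm_sq_arrowhead_le (s t : ℝ) (a b c d e : ℂ) :
    ‖t * a + s / 2 * e‖ ^ 2 + ‖-(t * b) + s / 2 * e‖ ^ 2 + ‖-(t * c) + s / 2 * e‖ ^ 2
      + ‖t * d + s / 2 * e‖ ^ 2 + ‖s / 2 * (a + b + c + d)‖ ^ 2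
      ≤ (s ^ 2 + t ^ 2) * (‖a‖ ^ 2 + ‖b‖ ^ 2 + ‖c‖ ^ 2 + ‖d‖ ^ 2 + ‖e‖ ^ 2) := by
  have sos : (s ^ 2 + t ^ 2) * (‖a‖ ^ 2 + ‖b‖ ^ 2 + ‖c‖ ^ 2 + ‖d‖ ^ 2 + ‖e‖ ^ 2)
      - (‖t * a + s / 2 * e‖ ^ 2 + ‖-(t * b) + s / 2 * e‖ ^ 2 + ‖-(t * c) + s / 2 * e‖ ^ 2
        + ‖t * d + s / 2 * e‖ ^ 2 + ‖s / 2 * (a + b + c + d)‖ ^ 2)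
      = ‖s / 2 * (a - b + c - d)‖ ^ 2 + ‖s / 2 * (a + b - c - d)‖ ^ 2
        + ‖s / 2 * (a - b - c + d) - t * e‖ ^ 2 := by
    simp only [Complex.sq_norm, Complex.normSq_apply, Complex.add_re, Complex.add_im,
      Complex.sub_re, Complex.sub_im, Complex.mul_re, Complex.mul_im, Complex.neg_re,
      Complex.neg_im, Complex.div_ofNat_re, Complex.div_ofNat_im, Complex.ofReal_re,
      Complex.ofReal_im]
    ring
  rw [← sub_nonneg, sos]
  positivity

lemma sum_norm_sq_Hst_mulVec_le (s t : ℝ) (y : Fin 3 × Fin 3 → ℂ) :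
    ∑ p, ‖(Hst s t *ᵥ y) p‖ ^ 2 ≤ (s ^ 2 + t ^ 2) * ∑ p, ‖y p‖ ^ 2 := by
  rw [Hst_mulVec]
  simp only [Fintype.sum_prod_type, Fin.sum_univ_three, cons_val_zero, cons_val_one,
    cons_val_two, head_cons, tail_cons]
  have hcenter := norm_sq_arrowhead_le s t (y (0,0)) (y (0,2)) (y (2,0)) (y (2,2)) (y (1,1))
  have hrow := two_mul_norm_sq_half_mul_add_le s (y (1,0)) (y (1,2))
  have hcol := two_mul_norm_sq_half_mul_add_le s (y (0,1)) (y (2,1))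
  have hslack : 0 ≤ t ^ 2 * (‖y (1,0)‖ ^ 2 + ‖y (1,2)‖ ^ 2 + ‖y (0,1)‖ ^ 2 + ‖y (2,1)‖ ^ 2) := by
    positivity
  linarith

noncomputable def topEigenvector (s t r : ℝ) : Fin 3 × Fin 3 → ℂ := fun p =>
  ![![((r : ℂ) + t) / 2, 0, ((r : ℂ) - t) / 2],
    ![0, s, 0],
    ![((r : ℂ) - t) / 2, 0, ((r : ℂ) + t) / 2]] p.1 p.2

lemma Hst_mulVec_topEigenvector (s t r : ℝ) (hr : r ^ 2 = s ^ 2 + t ^ 2) :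
    Hst s t *ᵥ topEigenvector s t r = (r : ℂ) • topEigenvector s t r := by
  have hrC : (r : ℂ) ^ 2 = s ^ 2 + t ^ 2 := by exact_mod_cast hr
  rw [Hst_mulVec]
  funext ⟨i, j⟩
  fin_cases i <;> fin_cases j <;> simp [topEigenvector] <;>
    first | linear_combination -hrC / 2 | ring

lemma topEigenvector_ne_zero (s t : ℝ) {r : ℝ} (hr : r ≠ 0) : topEigenvector s t r ≠ 0 := by
  intro h
  have hsum : topEigenvector s t r (0,0) + topEigenvector s t r (0,2) = r := by
    change ((r : ℂ) + t) / 2 + ((r : ℂ) - t) / 2 = r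
    ring
  simp [h] at hsum
  exact hr (by exact_mod_cast hsum.symm)

theorem Hst_opNorm_general (s t : ℝ) :
    ‖Hst s t‖ = Real.sqrt (s ^ 2 + t ^ 2) := by
  have hr : Real.sqrt (s ^ 2 + t ^ 2) ^ 2 = s ^ 2 + t ^ 2 := Real.sq_sqrt (by positivity)
  refine le_antisymm ?_ ?_
  · refine l2_opNorm_le_of_sum_norm_sq_le (Real.sqrt_nonneg _) fun y => ?_
    rw [hr]
    exact sum_norm_sq_Hst_mulVec_le s t y
  · rcases eq_or_ne (Real.sqrt (s ^ 2 + t ^ 2)) 0 with h0 | h0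
    · rw [h0]
      exact norm_nonneg _
    · simpa [abs_of_nonneg (Real.sqrt_nonneg _)] using
        norm_le_l2_opNorm_of_mulVec_eq_smul (topEigenvector_ne_zero s t h0)
          (Hst_mulVec_topEigenvector s t _ hr)

/-- For `s, t ≥ 0`, the (ℓ² → ℓ²) operator norm of
`H_{s,t} = s·Sx⊗Sx + t·Sz⊗Sz` equals `√(s² + t²)`. -/
theorem Hst_opNorm (s t : ℝ) (hs : 0 ≤ s) (ht : 0 ≤ t) :
    ‖Hst s t‖ = Real.sqrt (s ^ 2 + t ^ 2) :=
  Hst_opNorm_general s t
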